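/- If a value which is a pair (v1,v2) has a type that is a finite union ⋁_{i≤rank(t)} (t1^i,t2^i) of product types, then there exists an index i ≤ rank(t) such that v1 : t1^i and v2 : t2^i. (This holds because (v1,v2) is a value, i.e., of singleton type; it fails in general for arbitrary subtypes of the union.) -/

import Mathlib

/-- The values and regular types of semantic subtyping: `mem v t` is the
typing relation `v : t` (membership of v in the set-denotation of t);
`pairV v₁ v₂` is the pair value (v₁,v₂); `prodT t₁ t₂` the product type
(t₁,t₂), whose denotation is the set of pairs (v₁,v₂) with v₁ : t₁ and
v₂ : t₂; `orT` the union type and `bot` the empty type ⊥. -/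
structure SemTypes where
  Value : Type
  Ty : Type
  mem : Value → Ty → Prop
  pairV : Value → Value → Value
  prodT : Ty → Ty → Ty
  orT : Ty → Ty → Ty
  bot : Ty
  mem_prod : ∀ v₁ v₂ t₁ t₂,
    mem (pairV v₁ v₂) (prodT t₁ t₂) ↔ mem v₁ t₁ ∧ mem v₂ t₂
  mem_or : ∀ v t₁ t₂, mem v (orT t₁ t₂) ↔ mem v t₁ ∨ mem v t₂
  not_mem_bot : ∀ v, ¬ mem v bot

/-- Finite union ⋁ of a list of types. -/
def SemTypes.bigUnion (C : SemTypes) : List C.Ty → C.Ty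
  | [] => C.bot
  | t :: ts => C.orT t (C.bigUnion ts)

theorem SemTypes.mem_bigUnion_iff (C : SemTypes) (v : C.Value) :
    ∀ l : List C.Ty, C.mem v (C.bigUnion l) ↔ ∃ t ∈ l, C.mem v t
  | [] => by simp [bigUnion, C.not_mem_bot]
  | t :: ts => by simp [bigUnion, C.mem_or, C.mem_bigUnion_iff v ts]

/-- If a pair value (v₁,v₂) has a type that is a finite union
⋁_{i ≤ rank(t)} (t₁ⁱ, t₂ⁱ) of product types, then there exists an index
i with v₁ : t₁ⁱ and v₂ : t₂ⁱ.  (This holds because (v₁,v₂) is a value,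
i.e. of singleton type; it fails in general for arbitrary subtypes of
the union.) -/
theorem pair_value_in_union_of_products (C : SemTypes)
    (v₁ v₂ : C.Value) (n : ℕ) (t₁ t₂ : Fin n → C.Ty)
    (h : C.mem (C.pairV v₁ v₂)
        (C.bigUnion (List.ofFn fun i => C.prodT (t₁ i) (t₂ i)))) :
    ∃ i : Fin n, C.mem v₁ (t₁ i) ∧ C.mem v₂ (t₂ i) := by
  obtain ⟨_, hmem, hv⟩ := (C.mem_bigUnion_iff _ _).1 h
  obtain ⟨i, rfl⟩ := List.mem_ofFn.1 hmem
  exact ⟨i, (C.mem_prod _ _ _ _).1 hv⟩
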